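/- arXiv:2601.10839 — 3 statements merged into one kernel-verified Lean document; each statement's English description precedes it below -/
import Mathlib

section
/- Fix σ > 0, γ > 0, and ρ ∈ (0,1). For each integer n ≠ 0, the 3×3 complex matrix M_n = [[σ|n|+1, −σ|n|+1, 0], [ρ^{|n|}, ρ^{−|n|}, −ρ^{|n|}], [σ|n|ρ^{|n|−1}, −σρ^{−|n|−1}, −(σ|n|ρ^{|n|−1} + γρ^{|n|})]] is invertible. Consequently, for every f_n ∈ ℂ there exist unique a_n, b_n, c_n ∈ ℂ solving M_n (a_n, b_n, c_n)ᵀ = (f_n, 0, 0)ᵀ, and they depend linearly on f_n. -/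
/-!
The coefficient matrix is real. With `k = |n|` and `x = ρ ^ k`, expanding its determinant
gives `-((σk + 1)σ(k + 1)/ρ + γ((1 - x²) + σk(1 + x²)))`, which is negative because
`0 < x ≤ 1`. The solution for the data `f` is then `f` times the first column of `M⁻¹`.
-/

open Matrix

theorem Matrix.mulVec_eq_iff_eq_nonsing_inv_mulVec {m K : Type*} [Fintype m] [DecidableEq m]
    [CommRing K] {A : Matrix m m K} (hA : IsUnit A) {v b : m → K} :
    A *ᵥ v = b ↔ v = A⁻¹ *ᵥ b := by
  have hdet := (A.isUnit_iff_isUnit_det).1 hA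
  constructor
  · rintro rfl
    rw [mulVec_mulVec, nonsing_inv_mul _ hdet, one_mulVec]
  · rintro rfl
    rw [mulVec_mulVec, mul_nonsing_inv _ hdet, one_mulVec]

noncomputable def robinModeMatrix (σ γ ρ : ℝ) (k : ℕ) : Matrix (Fin 3) (Fin 3) ℝ :=
  !![σ * k + 1, -(σ * k) + 1, 0;
    ρ ^ (k : ℤ), ρ ^ (-(k : ℤ)), -(ρ ^ (k : ℤ));
    σ * k * ρ ^ ((k : ℤ) - 1), -(σ * ρ ^ (-(k : ℤ) - 1)),
      -(σ * k * ρ ^ ((k : ℤ) - 1) + γ * ρ ^ (k : ℤ))]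

theorem robinModeMatrix_det (σ γ : ℝ) {ρ : ℝ} (hρ : ρ ≠ 0) (k : ℕ) :
    (robinModeMatrix σ γ ρ k).det =
      -((σ * k + 1) * σ * (k + 1) / ρ + γ * ((1 - ρ ^ (2 * k)) + σ * k * (1 + ρ ^ (2 * k)))) := by
  simp only [robinModeMatrix, det_fin_three, of_apply, cons_val', cons_val_zero, cons_val_one,
    cons_val, cons_val_fin_one, zpow_natCast, _root_.zpow_neg, zpow_sub₀ hρ, zpow_ofNat, pow_one]
  field_simp
  ring

theorem robinModeMatrix_det_neg {σ γ ρ : ℝ} (hσ : 0 < σ) (hγ : 0 ≤ γ) (hρ : ρ ∈ Set.Ioc 0 1)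
    (k : ℕ) : (robinModeMatrix σ γ ρ k).det < 0 := by
  obtain ⟨hρ0, hρ1⟩ := hρ
  rw [robinModeMatrix_det σ γ hρ0.ne' k, neg_neg_iff_pos]
  have hpow : ρ ^ (2 * k) ≤ 1 := pow_le_one₀ hρ0.le hρ1
  have : 0 < (σ * k + 1) * σ * (k + 1) / ρ := by positivity
  have : 0 ≤ (1 - ρ ^ (2 * k)) + σ * k * (1 + ρ ^ (2 * k)) := by
    have : 0 ≤ σ * k * (1 + ρ ^ (2 * k)) := by positivity
    linarith
  positivity

theorem stmt6_general (σ γ ρ : ℝ) (hσ : 0 < σ) (hγ : 0 < γ) (hρ : ρ ∈ Set.Ioo (0 : ℝ) 1)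
    (n : ℤ)
    (M : Matrix (Fin 3) (Fin 3) ℂ)
    (hM : M = !![((σ * (n.natAbs : ℝ) + 1 : ℝ) : ℂ), ((-(σ * (n.natAbs : ℝ)) + 1 : ℝ) : ℂ), 0;
        ((ρ ^ (n.natAbs : ℤ) : ℝ) : ℂ), ((ρ ^ (-(n.natAbs : ℤ)) : ℝ) : ℂ),
          ((-(ρ ^ (n.natAbs : ℤ)) : ℝ) : ℂ);
        ((σ * (n.natAbs : ℝ) * ρ ^ ((n.natAbs : ℤ) - 1) : ℝ) : ℂ),
          ((-(σ * ρ ^ (-(n.natAbs : ℤ) - 1)) : ℝ) : ℂ),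
          ((-(σ * (n.natAbs : ℝ) * ρ ^ ((n.natAbs : ℤ) - 1) + γ * ρ ^ (n.natAbs : ℤ)) : ℝ) : ℂ)]) :
    IsUnit M ∧ ∃ α β ω : ℂ, ∀ f : ℂ,
      M.mulVec ![α * f, β * f, ω * f] = ![f, 0, 0] ∧
      ∀ v : Fin 3 → ℂ, M.mulVec v = ![f, 0, 0] → v = ![α * f, β * f, ω * f] := by
  have hM_map : M = Complex.ofRealHom.mapMatrix (robinModeMatrix σ γ ρ n.natAbs) := by
    subst hM
    ext i j
    fin_cases i <;> fin_cases j <;> rfl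
  have hunit : IsUnit M := by
    rw [M.isUnit_iff_isUnit_det, isUnit_iff_ne_zero, hM_map, ← RingHom.map_det,
      Complex.ofRealHom_eq_coe, Complex.ofReal_ne_zero]
    exact (robinModeMatrix_det_neg hσ hγ.le (Set.Ioo_subset_Ioc_self hρ) _).ne
  set w := M⁻¹ *ᵥ ![1, 0, 0]
  have hsol (f : ℂ) : ![w 0 * f, w 1 * f, w 2 * f] = M⁻¹ *ᵥ ![f, 0, 0] := by
    have : ![f, 0, 0] = f • ![(1 : ℂ), 0, 0] := by ext i; fin_cases i <;> simp
    rw [this, mulVec_smul]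
    ext i; fin_cases i <;> simp [w, mul_comm]
  refine ⟨hunit, w 0, w 1, w 2, fun f => ⟨?_, fun v hv => ?_⟩⟩
  · rw [hsol, mulVec_eq_iff_eq_nonsing_inv_mulVec hunit]
  · rw [hsol, ← mulVec_eq_iff_eq_nonsing_inv_mulVec hunit, hv]

/-- Mode-by-mode solvability (n ≠ 0) of the Robin transmission problem on the unit
disk with concentric circular interface of radius ρ: the 3×3 coefficient matrix is
invertible and the Fourier coefficients `a_n, b_n, c_n` depend linearly on `f_n`. -/
theorem stmt6 (σ γ ρ : ℝ) (hσ : 0 < σ) (hγ : 0 < γ) (hρ : ρ ∈ Set.Ioo (0 : ℝ) 1)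
    (n : ℤ) (hn : n ≠ 0)
    (M : Matrix (Fin 3) (Fin 3) ℂ)
    (hM : M = !![((σ * (n.natAbs : ℝ) + 1 : ℝ) : ℂ), ((-(σ * (n.natAbs : ℝ)) + 1 : ℝ) : ℂ), 0;
        ((ρ ^ (n.natAbs : ℤ) : ℝ) : ℂ), ((ρ ^ (-(n.natAbs : ℤ)) : ℝ) : ℂ),
          ((-(ρ ^ (n.natAbs : ℤ)) : ℝ) : ℂ);
        ((σ * (n.natAbs : ℝ) * ρ ^ ((n.natAbs : ℤ) - 1) : ℝ) : ℂ),
          ((-(σ * ρ ^ (-(n.natAbs : ℤ) - 1)) : ℝ) : ℂ),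
          ((-(σ * (n.natAbs : ℝ) * ρ ^ ((n.natAbs : ℤ) - 1) + γ * ρ ^ (n.natAbs : ℤ)) : ℝ) : ℂ)]) :
    IsUnit M ∧ ∃ α β ω : ℂ, ∀ f : ℂ,
      M.mulVec ![α * f, β * f, ω * f] = ![f, 0, 0] ∧
      ∀ v : Fin 3 → ℂ, M.mulVec v = ![f, 0, 0] → v = ![α * f, β * f, ω * f] :=
  stmt6_general σ γ ρ hσ hγ hρ n M hM
end

section
/- Let H be a Hilbert space, K : H → H a compact, injective, self-adjoint, positive linear operator with eigenvalues s_n > 0 and orthonormal eigenbasis (x_n). For α > 0 define the Tikhonov-regularized solution f_α = (K*K + αI)^{-1} K* g of K f = g. If g lies in the range of K^{1/2}, then sup_{α>0} (K f_α, f_α) < ∞. -/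
/-!
In the eigenbasis of `K` the Tikhonov equation decouples: the coefficients of `f_α` are
`⟪b n, f_α⟫ = s_n / (s_n² + α) ⟪b n, g⟫`, so with `⟪b n, g⟫ = √s_n ⟪b n, h⟫` the spectral sum
`(K f_α, f_α) = ∑ s_n |⟪b n, f_α⟫|²` has terms `φ_α(s_n)² |⟪b n, h⟫|²`, where
`φ_α(t) = t² / (t² + α) ∈ [0, 1]` is the Tikhonov filter. By Parseval the sum is at most `‖h‖²`,
uniformly in `α`.
-/

open scoped InnerProductSpace

open RCLike

noncomputable def tikhonovFilter (α t : ℝ) : ℝ := t ^ 2 / (t ^ 2 + α)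

lemma tikhonovFilter_nonneg {α : ℝ} (hα : 0 ≤ α) (t : ℝ) : 0 ≤ tikhonovFilter α t := by
  unfold tikhonovFilter; positivity

lemma tikhonovFilter_le_one {α : ℝ} (hα : 0 ≤ α) (t : ℝ) : tikhonovFilter α t ≤ 1 := by
  unfold tikhonovFilter
  rcases (add_nonneg (sq_nonneg t) hα).eq_or_lt with h | h
  · simp [← h]
  · rw [div_le_one h]; linarith

lemma mul_sq_div_mul_sqrt_eq_tikhonovFilter_sq {α t : ℝ} (hα : 0 < α) (ht : 0 ≤ t) :
    t * (t / (t ^ 2 + α) * √t) ^ 2 = tikhonovFilter α t ^ 2 := by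
  have : t ^ 2 + α ≠ 0 := by positivity
  rw [tikhonovFilter, mul_pow, Real.sq_sqrt ht]
  field_simp

section

variable {𝕜 H : Type*} [RCLike 𝕜] [NormedAddCommGroup H] [InnerProductSpace 𝕜 H]

lemma HilbertBasis.hasSum_norm_sq_inner {ι : Type*} (b : HilbertBasis ι 𝕜 H) (x : H) :
    HasSum (fun i => ‖⟪b i, x⟫_𝕜‖ ^ 2) (‖x‖ ^ 2) := by
  have := b.hasSum_inner_mul_inner x x
  simp only [← inner_conj_symm x (b _), RCLike.conj_mul, inner_self_eq_norm_sq_to_K] at this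
  exact_mod_cast this

variable [CompleteSpace H] {T : H →L[𝕜] H}

lemma IsSelfAdjoint.inner_apply_of_apply_eq_smul (hT : IsSelfAdjoint T) {v : H} {c : ℝ}
    (hv : T v = (c : 𝕜) • v) (x : H) : ⟪v, T x⟫_𝕜 = c * ⟪v, x⟫_𝕜 := by
  rw [← hT.isSymmetric.apply_clm, hv, inner_smul_left, conj_ofReal]

lemma IsSelfAdjoint.hasSum_re_inner_apply_self {ι : Type*} (hT : IsSelfAdjoint T)
    (b : HilbertBasis ι 𝕜 H) {s : ι → ℝ} (hTb : ∀ i, T (b i) = (s i : 𝕜) • b i) (x : H) :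
    HasSum (fun i => s i * ‖⟪b i, x⟫_𝕜‖ ^ 2) (re ⟪T x, x⟫_𝕜) := by
  have hterm (i : ι) : ⟪T x, b i⟫_𝕜 * ⟪b i, x⟫_𝕜 = ((s i * ‖⟪b i, x⟫_𝕜‖ ^ 2 : ℝ) : 𝕜) := by
    rw [← inner_conj_symm (T x), hT.inner_apply_of_apply_eq_smul (hTb i), map_mul, conj_ofReal,
      mul_assoc, RCLike.conj_mul]
    push_cast; rfl
  simpa only [hterm, ofReal_re] using hasSum_re 𝕜 (b.hasSum_inner_mul_inner (T x) x)

lemma IsSelfAdjoint.inner_tikhonov_eq (hT : IsSelfAdjoint T) {v : H} {c : ℝ}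
    (hv : T v = (c : 𝕜) • v) {α : ℝ} (hα : 0 < α) {y g : H}
    (hy : ((ContinuousLinearMap.adjoint T).comp T + (α : 𝕜) • ContinuousLinearMap.id 𝕜 H) y =
      ContinuousLinearMap.adjoint T g) :
    ⟪v, y⟫_𝕜 = (c / (c ^ 2 + α) : ℝ) * ⟪v, g⟫_𝕜 := by
  have hden : (c : 𝕜) ^ 2 + α ≠ 0 := by exact_mod_cast (by positivity : c ^ 2 + α ≠ 0)
  have := congrArg (⟪v, ·⟫_𝕜) hy
  simp only [add_apply, ContinuousLinearMap.comp_apply,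
    smul_apply, ContinuousLinearMap.id_apply, inner_add_right, inner_smul_right,
    hT.adjoint_eq, hT.inner_apply_of_apply_eq_smul hv] at this
  push_cast
  field_simp
  linear_combination this

end

theorem stmt11_general {H : Type*} [NormedAddCommGroup H] [InnerProductSpace ℂ H]
    [CompleteSpace H]
    (K : H →L[ℂ] H)
    (hsa : IsSelfAdjoint K)
    (b : HilbertBasis ℕ ℂ H) (s : ℕ → ℝ) (hs : ∀ n, 0 < s n)
    (hKb : ∀ n, K (b n) = (s n : ℂ) • b n)
    (g : H) (hg : ∃ h : H, ∀ n, ⟪b n, g⟫_ℂ = (Real.sqrt (s n) : ℂ) * ⟪b n, h⟫_ℂ)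
    (f : ℝ → H)
    (hf : ∀ α : ℝ, 0 < α →
      (((ContinuousLinearMap.adjoint K).comp K +
        (α : ℂ) • ContinuousLinearMap.id ℂ H) (f α)) = (ContinuousLinearMap.adjoint K) g) :
    ∃ C : ℝ, ∀ α : ℝ, 0 < α → (⟪K (f α), f α⟫_ℂ).re ≤ C := by
  obtain ⟨h, hgh⟩ := hg
  refine ⟨‖h‖ ^ 2, fun α hα => ?_⟩
  have hterm (n : ℕ) :
      s n * ‖⟪b n, f α⟫_ℂ‖ ^ 2 = tikhonovFilter α (s n) ^ 2 * ‖⟪b n, h⟫_ℂ‖ ^ 2 := by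
    rw [hsa.inner_tikhonov_eq (hKb n) hα (hf α hα), hgh, ← mul_assoc, norm_mul, norm_mul,
      norm_ofReal, Complex.norm_real, Real.norm_eq_abs, abs_of_nonneg (Real.sqrt_nonneg _),
      mul_pow, mul_pow, sq_abs, ← mul_pow, ← mul_assoc, mul_sq_div_mul_sqrt_eq_tikhonovFilter_sq hα (hs n).le]
  refine hasSum_le (fun n => ?_) (hsa.hasSum_re_inner_apply_self b hKb (f α))
    (b.hasSum_norm_sq_inner h)
  rw [hterm]
  exact mul_le_of_le_one_left (sq_nonneg _)
    (pow_le_one₀ (tikhonovFilter_nonneg hα.le _) (tikhonovFilter_le_one hα.le _))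

/-- If `K` is compact, injective, self-adjoint and positive with eigenvalues `s n > 0`
and orthonormal eigenbasis `b`, and `g` lies in the range of `K^{1/2}` (expressed
spectrally), then the Tikhonov-regularized solutions `f α` of `K f = g`, i.e.
`(K*K + αI) f_α = K* g`, satisfy `sup_{α>0} (K f_α, f_α) < ∞`. -/
theorem stmt11 {H : Type*} [NormedAddCommGroup H] [InnerProductSpace ℂ H]
    [CompleteSpace H]
    (K : H →L[ℂ] H) (hcomp : IsCompactOperator ⇑K) (hinj : Function.Injective ⇑K)
    (hsa : IsSelfAdjoint K) (hpos : ∀ v : H, 0 ≤ (⟪K v, v⟫_ℂ).re)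
    (b : HilbertBasis ℕ ℂ H) (s : ℕ → ℝ) (hs : ∀ n, 0 < s n)
    (hKb : ∀ n, K (b n) = (s n : ℂ) • b n)
    (g : H) (hg : ∃ h : H, ∀ n, ⟪b n, g⟫_ℂ = (Real.sqrt (s n) : ℂ) * ⟪b n, h⟫_ℂ)
    (f : ℝ → H)
    (hf : ∀ α : ℝ, 0 < α →
      (((ContinuousLinearMap.adjoint K).comp K +
        (α : ℂ) • ContinuousLinearMap.id ℂ H) (f α)) = (ContinuousLinearMap.adjoint K) g) :
    ∃ C : ℝ, ∀ α : ℝ, 0 < α → (⟪K (f α), f α⟫_ℂ).re ≤ C :=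
  stmt11_general K hsa b s hs hKb g hg f hf
end

section
/- Let H be a Hilbert space, K : H → H compact, self-adjoint, positive, and injective with eigenvalues s_n ↓ 0 and orthonormal eigenbasis (x_n). Fix g ∈ H and for α > 0 let f_α = Σ_n (φ_α(s_n)/s_n) ⟨g, x_n⟩ x_n, where φ_α is the spectral cut-off filter (φ_α(t) = 1 if t² ≥ α, else 0). Then ⟨K f_α, f_α⟩ = Σ_{n : s_n² ≥ α} s_n^{-1} |⟨g, x_n⟩|², and consequently liminf_{α→0} ⟨K f_α, f_α⟩ < ∞ if and only if Σ_n s_n^{-1} |⟨g, x_n⟩|² < ∞. -/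
open scoped InnerProductSpace
open Filter Topology

/-!
On the eigenbasis, `K f_α = ∑_{s_n² ≥ α} ⟨b_n, g⟩ b_n` and `f_α` has coefficients
`s_n⁻¹ ⟨b_n, g⟩` on the same indices, a finite set because `s_n → 0`; so `⟨K f_α, f_α⟩` is
the finite partial sum `∑_{s_n² ≥ α} s_n⁻¹ |⟨b_n, g⟩|²`. As `α → 0⁺` these index sets exhaust `ℕ`,
so the partial sums are bounded by the full series when it converges, and eventually exceed
every partial sum `∑_{n < N}` when it diverges.
-/

theorem tsum_subtype_eq_sum_of_finite {α β : Type*} [AddCommMonoid β] [TopologicalSpace β]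
    {p : α → Prop} (hS : {x | p x}.Finite) (f : α → β) :
    ∑' x : {x // p x}, f x = ∑ x ∈ hS.toFinset, f x := by
  refine (tsum_subtype {x | p x} f).trans ?_
  rw [tsum_eq_sum (s := hS.toFinset) fun x hx ↦
    Set.indicator_of_notMem (by simpa using hx) f]
  exact Finset.sum_congr rfl fun x hx ↦ Set.indicator_of_mem (by simpa using hx) f

theorem finite_setOf_le_of_tendsto_zero {u : ℕ → ℝ} (hu : Tendsto u atTop (𝓝 0)) {α : ℝ}
    (hα : 0 < α) : {n | α ≤ u n}.Finite := by
  have h : ∀ᶠ n in cofinite, u n < α := Nat.cofinite_eq_atTop ▸ hu.eventually_lt_const hα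
  simpa only [not_lt] using eventually_cofinite.mp h

theorem Orthonormal.inner_map_sum_smul_of_eigen {𝕜 E ι : Type*} [RCLike 𝕜]
    [NormedAddCommGroup E] [InnerProductSpace 𝕜 E] {b : ι → E} (hb : Orthonormal 𝕜 b)
    (K : E →L[𝕜] E) (s : ι → ℝ) (hK : ∀ i, K (b i) = (s i : 𝕜) • b i) (T : Finset ι)
    (c : ι → 𝕜) :
    ⟪K (∑ i ∈ T, c i • b i), ∑ i ∈ T, c i • b i⟫_𝕜 = ((∑ i ∈ T, s i * ‖c i‖ ^ 2 : ℝ) : 𝕜) := by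
  have hKsum : K (∑ i ∈ T, c i • b i) = ∑ i ∈ T, ((s i : 𝕜) * c i) • b i := by
    simp only [map_sum, map_smul, hK, smul_smul, mul_comm]
  rw [hKsum, hb.inner_sum]
  push_cast
  refine Finset.sum_congr rfl fun i _ ↦ ?_
  rw [map_mul, RCLike.conj_ofReal, mul_assoc, RCLike.conj_mul]

theorem liminf_ofReal_tsum_setOf_le_lt_top_iff {t u : ℕ → ℝ} (ht : ∀ n, 0 ≤ t n)
    (hu : ∀ n, 0 < u n) (hfin : ∀ α, 0 < α → {n | α ≤ u n}.Finite) :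
    liminf (fun α ↦ ENNReal.ofReal (∑' n : {n // α ≤ u n}, t n)) (𝓝[>] 0) < ⊤ ↔
      Summable t := by
  constructor
  · intro hlt
    by_contra hns
    have htend := (not_summable_iff_tendsto_nat_atTop_of_nonneg ht).1 hns
    refine hlt.ne (ENNReal.eq_top_of_forall_nnreal_le fun r ↦ ?_)
    obtain ⟨N, hN⟩ := (htend.eventually_gt_atTop (r : ℝ)).exists
    have hsmall : ∀ᶠ α in 𝓝[>] (0 : ℝ), ∀ n ∈ Finset.range N, α ≤ u n :=
      (eventually_all_finset _).2 fun n _ ↦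
        nhdsWithin_le_nhds ((eventually_lt_nhds (hu n)).mono fun _ h ↦ h.le)
    rw [← ENNReal.ofReal_coe_nnreal]
    refine le_liminf_of_le (by isBoundedDefault) ?_
    filter_upwards [hsmall, self_mem_nhdsWithin] with α hα (hαpos : 0 < α)
    refine ENNReal.ofReal_le_ofReal (hN.le.trans ?_)
    rw [tsum_subtype_eq_sum_of_finite (hfin α hαpos) t]
    exact Finset.sum_le_sum_of_subset_of_nonneg (fun n hn ↦ by simpa using hα n hn)
      fun n _ _ ↦ ht n
  · intro hsum
    refine lt_of_le_of_lt (liminf_le_of_frequently_le' (Frequently.of_forall fun α ↦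
      ENNReal.ofReal_le_ofReal (hsum.tsum_subtype_le t {n | α ≤ u n} ht))) ENNReal.ofReal_lt_top

theorem Orthonormal.inner_map_cutoff_eq {E ι : Type*} [NormedAddCommGroup E]
    [InnerProductSpace ℂ E] {b : ι → E} (hb : Orthonormal ℂ b) (K : E →L[ℂ] E) (s : ι → ℝ)
    (hK : ∀ i, K (b i) = (s i : ℂ) • b i) (g : E) {α : ℝ} (hfin : {i | α ≤ s i ^ 2}.Finite)
    (v : E) (hv : v = ∑' i, ((((if α ≤ s i ^ 2 then (1 : ℝ) else 0) / s i : ℝ) : ℂ) *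
      ⟪b i, g⟫_ℂ) • b i) :
    ⟪K v, v⟫_ℂ = ((∑' i : {i // α ≤ s i ^ 2}, (s i.1)⁻¹ * ‖⟪b i.1, g⟫_ℂ‖ ^ 2 : ℝ) : ℂ) := by
  have hv' : v = ∑ i ∈ hfin.toFinset, ((s i : ℂ)⁻¹ * ⟪b i, g⟫_ℂ) • b i := by
    rw [hv, tsum_eq_sum fun i hi ↦ ?_]
    · refine Finset.sum_congr rfl fun i hi ↦ ?_
      rw [if_pos (by simpa using hi), one_div, Complex.ofReal_inv]
    · rw [if_neg (by simpa using hi), zero_div, Complex.ofReal_zero, zero_mul, zero_smul]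
  rw [hv', hb.inner_map_sum_smul_of_eigen K s hK,
    tsum_subtype_eq_sum_of_finite hfin fun i ↦ (s i)⁻¹ * ‖⟪b i, g⟫_ℂ‖ ^ 2]
  refine congrArg _ (Finset.sum_congr rfl fun i _ ↦ ?_)
  rw [norm_mul, norm_inv, Complex.norm_real, Real.norm_eq_abs, mul_pow, inv_pow, sq_abs]
  rcases eq_or_ne (s i) 0 with hsi | hsi
  · simp [hsi]
  · field_simp

theorem stmt14_general {H : Type*} [NormedAddCommGroup H] [InnerProductSpace ℂ H]
    (K : H →L[ℂ] H)
    (b : HilbertBasis ℕ ℂ H) (s : ℕ → ℝ) (hs : ∀ n, 0 < s n)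
    (hlim : Filter.Tendsto s Filter.atTop (nhds 0))
    (hKb : ∀ n, K (b n) = (s n : ℂ) • b n)
    (g : H) (f : ℝ → H)
    (hf : ∀ α : ℝ, f α = ∑' n : ℕ,
      ((((if α ≤ (s n) ^ 2 then (1 : ℝ) else 0) / s n : ℝ) : ℂ) * ⟪b n, g⟫_ℂ) • b n) :
    (∀ α : ℝ, 0 < α → ⟪K (f α), f α⟫_ℂ =
      ((∑' n : {n : ℕ // α ≤ (s n) ^ 2}, (s n.1)⁻¹ * ‖⟪b n.1, g⟫_ℂ‖ ^ 2 : ℝ) : ℂ)) ∧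
    (Filter.liminf (fun α : ℝ => ENNReal.ofReal ((⟪K (f α), f α⟫_ℂ).re))
        (nhdsWithin 0 (Set.Ioi 0)) < ⊤ ↔
      Summable (fun n : ℕ => (s n)⁻¹ * ‖⟪b n, g⟫_ℂ‖ ^ 2)) := by
  have hfin : ∀ α, 0 < α → {n | α ≤ s n ^ 2}.Finite := fun α ↦
    finite_setOf_le_of_tendsto_zero (by simpa using hlim.pow 2)
  have hquad : ∀ α : ℝ, 0 < α → ⟪K (f α), f α⟫_ℂ =
      ((∑' n : {n : ℕ // α ≤ (s n) ^ 2}, (s n.1)⁻¹ * ‖⟪b n.1, g⟫_ℂ‖ ^ 2 : ℝ) : ℂ) :=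
    fun α hα ↦ b.orthonormal.inner_map_cutoff_eq K s hKb g (hfin α hα) (f α) (hf α)
  refine ⟨hquad, ?_⟩
  have hre : (fun α : ℝ ↦ ENNReal.ofReal (⟪K (f α), f α⟫_ℂ).re) =ᶠ[𝓝[>] 0]
      fun α ↦ ENNReal.ofReal (∑' n : {n : ℕ // α ≤ (s n) ^ 2}, (s n.1)⁻¹ * ‖⟪b n.1, g⟫_ℂ‖ ^ 2) :=
    eventually_mem_nhdsWithin.mono fun α (hα : 0 < α) ↦ by
      simp only [hquad α hα, Complex.ofReal_re]
  rw [liminf_congr hre]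
  exact liminf_ofReal_tsum_setOf_le_lt_top_iff (u := fun n ↦ s n ^ 2)
    (t := fun n ↦ (s n)⁻¹ * ‖⟪b n, g⟫_ℂ‖ ^ 2) (fun n ↦ by have := hs n; positivity)
    (fun n ↦ pow_pos (hs n) 2) hfin

/-- Spectral cut-off range characterization: for a compact, self-adjoint, positive,
injective operator `K` with eigenvalues `s n ↓ 0` and eigenbasis `b`, the
regularized solutions `f α = ∑ (φ_α(s n)/s n) ⟨g, b n⟩ b n` (spectral cut-off filter)
satisfy `⟨K (f α), f α⟩ = ∑_{s n² ≥ α} (s n)⁻¹ |⟨g, b n⟩|²`, and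
`liminf_{α→0⁺} ⟨K (f α), f α⟩ < ∞` iff `∑ (s n)⁻¹ |⟨g, b n⟩|² < ∞`. -/
theorem stmt14 {H : Type*} [NormedAddCommGroup H] [InnerProductSpace ℂ H]
    [CompleteSpace H]
    (K : H →L[ℂ] H) (hcomp : IsCompactOperator ⇑K) (hsa : IsSelfAdjoint K)
    (hpos : ∀ v : H, 0 ≤ (⟪K v, v⟫_ℂ).re) (hinj : Function.Injective ⇑K)
    (b : HilbertBasis ℕ ℂ H) (s : ℕ → ℝ) (hs : ∀ n, 0 < s n) (hanti : Antitone s)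
    (hlim : Filter.Tendsto s Filter.atTop (nhds 0))
    (hKb : ∀ n, K (b n) = (s n : ℂ) • b n)
    (g : H) (f : ℝ → H)
    (hf : ∀ α : ℝ, f α = ∑' n : ℕ,
      ((((if α ≤ (s n) ^ 2 then (1 : ℝ) else 0) / s n : ℝ) : ℂ) * ⟪b n, g⟫_ℂ) • b n) :
    (∀ α : ℝ, 0 < α → ⟪K (f α), f α⟫_ℂ =
      ((∑' n : {n : ℕ // α ≤ (s n) ^ 2}, (s n.1)⁻¹ * ‖⟪b n.1, g⟫_ℂ‖ ^ 2 : ℝ) : ℂ)) ∧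
    (Filter.liminf (fun α : ℝ => ENNReal.ofReal ((⟪K (f α), f α⟫_ℂ).re))
        (nhdsWithin 0 (Set.Ioi 0)) < ⊤ ↔
      Summable (fun n : ℕ => (s n)⁻¹ * ‖⟪b n, g⟫_ℂ‖ ^ 2)) :=
  stmt14_general K b s hs hlim hKb g f hf
end
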